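/- Let c_0, c_1, ..., c_m be positive real numbers. Then every complex zero z of the polynomial p(z) = Σ_{k=0}^{m} c_k z^k satisfies min_{0 ≤ k ≤ m-1} (c_k/c_{k+1}) ≤ |z| ≤ max_{0 ≤ k ≤ m-1} (c_k/c_{k+1}). -/

import Mathlib

/-!
For coefficients `0 ≤ a₀ ≤ a₁ ≤ ⋯ ≤ aₘ` with `aₘ > 0` (the classical Eneström–Kakeya setting),
multiplying `p(z) = ∑ aₖ zᵏ` by `z - 1` gives, at a zero `z`,
`aₘ z^(m+1) = a₀ + ∑ (aₖ₊₁ - aₖ) z^(k+1)` with nonnegative coefficients on the right. If `|z| > 1`,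
the right side has modulus at most `aₘ |z|^m < aₘ |z|^(m+1)`, a contradiction; so `|z| ≤ 1`.
The substitution `z = β w` turns the hypothesis `cₖ ≤ β cₖ₊₁` into monotonicity of `cₖ βᵏ`, which
gives the upper bound `|z| ≤ max cₖ / cₖ₊₁`; the lower bound is the upper bound for the reversed
polynomial `∑ c_{m-k} zᵏ`, whose zeros are the inverses of those of `p`.
-/

open Finset

theorem sub_one_mul_sum_range_mul_pow {R : Type*} [CommRing R] (a : ℕ → R) (z : R) (m : ℕ) :
    (z - 1) * ∑ k ∈ range (m + 1), a k * z ^ k =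
      a m * z ^ (m + 1) - a 0 - ∑ k ∈ range m, (a (k + 1) - a k) * z ^ (k + 1) := by
  induction m with
  | zero =>
    simp only [zero_add, range_one, sum_singleton, pow_zero, mul_one, pow_one, range_zero,
      sum_empty, sub_zero]
    ring
  | succ m ih =>
    rw [sum_range_succ, mul_add, ih, sum_range_succ]
    ring

theorem sum_range_mul_inv_pow_reflect_eq_zero {K : Type*} [Field K] (c : ℕ → K) (m : ℕ) {z : K}
    (hz0 : z ≠ 0) (hz : ∑ k ∈ range (m + 1), c k * z ^ k = 0) :
    ∑ k ∈ range (m + 1), c (m - k) * z⁻¹ ^ k = 0 := by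
  have hscale : z ^ m * ∑ k ∈ range (m + 1), c (m - k) * z⁻¹ ^ k =
      ∑ k ∈ range (m + 1), c k * z ^ k := by
    rw [mul_sum, ← sum_range_reflect (fun k => c k * z ^ k)]
    refine sum_congr rfl fun k hk => ?_
    have hkm : k ≤ m := Nat.lt_succ_iff.mp (mem_range.mp hk)
    rw [Nat.add_sub_cancel, inv_pow, ← pow_sub_mul_pow z hkm]
    field_simp
  rw [hz] at hscale
  exact (mul_eq_zero.mp hscale).resolve_left (pow_ne_zero m hz0)

theorem norm_le_one_of_sum_eq_zero_of_monotone (a : ℕ → ℝ) (m : ℕ) (h0 : 0 ≤ a 0)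
    (hmono : ∀ k < m, a k ≤ a (k + 1)) (hm : 0 < a m) {z : ℂ}
    (hz : ∑ k ∈ range (m + 1), (a k : ℂ) * z ^ k = 0) : ‖z‖ ≤ 1 := by
  by_contra! hr
  set r := ‖z‖
  have hid := sub_one_mul_sum_range_mul_pow (fun k => (a k : ℂ)) z m
  rw [hz, mul_zero, sub_sub, eq_comm, sub_eq_zero] at hid
  have hnorm : a m * r ^ (m + 1) ≤ a 0 + ∑ k ∈ range m, (a (k + 1) - a k) * r ^ (k + 1) := by
    have := congrArg norm hid
    rw [norm_mul, norm_pow, Complex.norm_real, Real.norm_of_nonneg hm.le] at this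
    rw [this]
    refine (norm_add_le _ _).trans (add_le_add (by simp [abs_of_nonneg h0]) ?_)
    refine (norm_sum_le _ _).trans (sum_le_sum fun k hk => ?_)
    rw [norm_mul, norm_pow, ← Complex.ofReal_sub, Complex.norm_real,
      Real.norm_of_nonneg (sub_nonneg.mpr (hmono k (mem_range.mp hk)))]
  have hbound : a 0 + ∑ k ∈ range m, (a (k + 1) - a k) * r ^ (k + 1) ≤ a m * r ^ m := by
    calc a 0 + ∑ k ∈ range m, (a (k + 1) - a k) * r ^ (k + 1)
        ≤ a 0 * r ^ m + ∑ k ∈ range m, (a (k + 1) - a k) * r ^ m := by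
          gcongr with k hk
          · exact le_mul_of_one_le_right h0 (one_le_pow₀ hr.le)
          · exact sub_nonneg.mpr (hmono k (mem_range.mp hk))
          · exact hr.le
          · exact mem_range.mp hk
      _ = a m * r ^ m := by rw [← sum_mul, sum_range_sub a m]; ring
  have hgrow : a m * r ^ m < a m * r ^ (m + 1) :=
    mul_lt_mul_of_pos_left (pow_lt_pow_right₀ hr m.lt_succ_self) hm
  linarith

theorem norm_le_of_sum_eq_zero_of_le_mul_succ (c : ℕ → ℝ) (m : ℕ) {β : ℝ} (hβ : 0 < β)
    (h0 : 0 ≤ c 0) (hstep : ∀ k < m, c k ≤ β * c (k + 1)) (hm : 0 < c m) {z : ℂ}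
    (hz : ∑ k ∈ range (m + 1), (c k : ℂ) * z ^ k = 0) : ‖z‖ ≤ β := by
  have hscaled : ‖z / β‖ ≤ 1 := by
    refine norm_le_one_of_sum_eq_zero_of_monotone (fun k => c k * β ^ k) m (by simpa using h0)
      (fun k hk => ?_) (by positivity) ?_
    · calc c k * β ^ k ≤ β * c (k + 1) * β ^ k := by gcongr; exact hstep k hk
        _ = c (k + 1) * β ^ (k + 1) := by ring
    · rw [← hz]
      refine sum_congr rfl fun k _ => ?_
      have : (β : ℂ) ≠ 0 := Complex.ofReal_ne_zero.mpr hβ.ne'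
      push_cast
      rw [div_pow, mul_assoc, mul_div_cancel₀ _ (pow_ne_zero k this)]
  rwa [norm_div, Complex.norm_real, Real.norm_of_nonneg hβ.le, div_le_one hβ] at hscaled

theorem le_norm_of_sum_eq_zero_of_mul_succ_le (c : ℕ → ℝ) (m : ℕ) {α : ℝ} (hα : 0 < α)
    (h0 : 0 < c 0) (hstep : ∀ k < m, α * c (k + 1) ≤ c k) (hm : 0 ≤ c m) {z : ℂ}
    (hz : ∑ k ∈ range (m + 1), (c k : ℂ) * z ^ k = 0) : α ≤ ‖z‖ := by
  have hz0 : z ≠ 0 := by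
    rintro rfl
    simp [sum_range_succ', h0.ne'] at hz
  have hinv : ‖z⁻¹‖ ≤ α⁻¹ := by
    refine norm_le_of_sum_eq_zero_of_le_mul_succ (fun k => c (m - k)) m (inv_pos.mpr hα)
      (by simpa using hm) (fun k hk => ?_) (by simpa using h0)
      (sum_range_mul_inv_pow_reflect_eq_zero (fun k => (c k : ℂ)) m hz0 hz)
    show c (m - k) ≤ α⁻¹ * c (m - (k + 1))
    rw [inv_mul_eq_div, le_div_iff₀' hα, show m - k = m - (k + 1) + 1 by omega]
    exact hstep _ (by omega)
  rwa [norm_inv, inv_le_inv₀ (norm_pos_iff.mpr hz0) hα] at hinv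

theorem enestrom_kakeya
    (m : ℕ) (hm : 0 < m) (c : ℕ → ℝ) (hc : ∀ k ≤ m, 0 < c k)
    (z : ℂ) (hz : ∑ k ∈ range (m + 1), (c k : ℂ) * z ^ k = 0) :
    (range m).inf' (Finset.nonempty_range_iff.mpr hm.ne') (fun k => c k / c (k + 1))
      ≤ ‖z‖ ∧
    ‖z‖ ≤
      (range m).sup' (Finset.nonempty_range_iff.mpr hm.ne') (fun k => c k / c (k + 1)) := by
  have hne : (range m).Nonempty := nonempty_range_iff.mpr hm.ne'
  have hratio_pos : ∀ k ∈ range m, 0 < c k / c (k + 1) := fun k hk =>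
    div_pos (hc k (mem_range.mp hk).le) (hc (k + 1) (mem_range.mp hk))
  have hmin_pos : 0 < (range m).inf' hne (fun k => c k / c (k + 1)) :=
    (lt_inf'_iff hne).mpr hratio_pos
  have hmax_pos : 0 < (range m).sup' hne (fun k => c k / c (k + 1)) :=
    (hratio_pos 0 (mem_range.mpr hm)).trans_le
      (le_sup' (fun k => c k / c (k + 1)) (mem_range.mpr hm))
  constructor
  · refine le_norm_of_sum_eq_zero_of_mul_succ_le c m hmin_pos (hc 0 m.zero_le)
      (fun k hk => ?_) (hc m le_rfl).le hz
    rw [← le_div_iff₀ (hc (k + 1) hk)]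
    exact inf'_le _ (mem_range.mpr hk)
  · refine norm_le_of_sum_eq_zero_of_le_mul_succ c m hmax_pos (hc 0 m.zero_le).le
      (fun k hk => ?_) (hc m le_rfl) hz
    rw [← div_le_iff₀ (hc (k + 1) hk)]
    exact le_sup' (fun k => c k / c (k + 1)) (mem_range.mpr hk)
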